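/- arXiv:1804.01775 — 6 statements merged into one kernel-verified Lean document; each statement's English description precedes it below -/
import Mathlib

section
/- For all integers n ≥ 1 and 1 ≤ m ≤ n, the sum over j from 0 to n−1 of j!·(n−j−1)!/n! · C(n−m, j) equals 1/m. -/
lemma key_nat (n m : ℕ) (hm1 : 1 ≤ m) (hmn : m ≤ n) :
    ∑ j ∈ Finset.range n,
      m * (j.factorial * (n - j - 1).factorial * ((n - m).choose j)) = n.factorial := by
  have hsub : Finset.range (n - m + 1) ⊆ Finset.range n := by
    intro x hx
    simp only [Finset.mem_range] at *
    omega
  rw [← Finset.sum_subset hsub (by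
    intro j _ hj
    simp only [Finset.mem_range] at hj
    have : (n - m).choose j = 0 := Nat.choose_eq_zero_of_lt (by omega)
    simp [this])]
  have hterm : ∀ j ∈ Finset.range (n - m + 1),
      m * (j.factorial * (n - j - 1).factorial * ((n - m).choose j)) =
        m.factorial * (n - m).factorial * (n - 1 - j).choose (m - 1) := by
    intro j hj
    simp only [Finset.mem_range] at hj
    have hj' : j ≤ n - m := by omega
    have h1 : (n - 1 - j).choose (m - 1) * (m - 1).factorial * (n - 1 - j - (m - 1)).factorial
        = (n - 1 - j).factorial :=
      Nat.choose_mul_factorial_mul_factorial (by omega)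
    have h2 : (n - m).choose j * j.factorial * (n - m - j).factorial = (n - m).factorial :=
      Nat.choose_mul_factorial_mul_factorial (by omega)
    have e1 : n - 1 - j - (m - 1) = n - m - j := by omega
    have e2 : n - j - 1 = n - 1 - j := by omega
    have e3 : m * (m - 1).factorial = m.factorial := by
      obtain ⟨k, rfl⟩ : ∃ k, m = k + 1 := ⟨m - 1, by omega⟩
      simp [Nat.factorial_succ]
    rw [e2, ← h1, e1, ← h2, ← e3]
    ring
  rw [Finset.sum_congr rfl hterm, ← Finset.mul_sum]
  have hrefl : ∑ j ∈ Finset.range (n - m + 1), (n - 1 - j).choose (m - 1)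
      = ∑ j ∈ Finset.range (n - m + 1), (j + (m - 1)).choose (m - 1) := by
    rw [← Finset.sum_range_reflect]
    apply Finset.sum_congr rfl
    intro j hj
    simp only [Finset.mem_range] at hj
    congr 1
    omega
  rw [hrefl, Nat.sum_range_add_choose]
  have e4 : n - m + (m - 1) + 1 = n := by omega
  have e5 : m - 1 + 1 = m := by omega
  rw [e4, e5]
  have := Nat.choose_mul_factorial_mul_factorial hmn
  calc m.factorial * (n - m).factorial * n.choose m
      = n.choose m * m.factorial * (n - m).factorial := by ring
    _ = n.factorial := this

theorem stmt_0 (n m : ℕ) (hn : 1 ≤ n) (hm1 : 1 ≤ m) (hmn : m ≤ n) :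
    ∑ j ∈ Finset.range n,
      (j.factorial * (n - j - 1).factorial : ℚ) / n.factorial * ((n - m).choose j) =
    1 / m := by
  have hm0 : (m : ℚ) ≠ 0 := by positivity
  have hn0 : (n.factorial : ℚ) ≠ 0 := by positivity
  have key : (∑ j ∈ Finset.range n,
      (m : ℚ) * (j.factorial * (n - j - 1).factorial * ((n - m).choose j))) = n.factorial := by
    exact_mod_cast key_nat n m hm1 hmn
  rw [eq_div_iff hm0, Finset.sum_mul]
  have : ∀ j ∈ Finset.range n,
      (j.factorial * (n - j - 1).factorial : ℚ) / n.factorial * ((n - m).choose j) * m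
      = (m : ℚ) * (j.factorial * (n - j - 1).factorial * ((n - m).choose j)) / n.factorial := by
    intro j _
    ring
  rw [Finset.sum_congr rfl this, ← Finset.sum_div, key, div_self hn0]
end

section
/- Let Σ be a finite nonempty set, E a finite set, C : E → P(Σ) a map with C(e) nonempty for all e, and ω : E → ℝ. Define the coalitional game W : P(Σ) → ℝ by W(X) = Σ_{e : X ∩ C(e) ≠ ∅} ω(e). Then for every a ∈ Σ, the Shapley value SV_a(W) = Σ_{X ⊆ Σ, a ∈ X} ((|X|−1)!(|Σ|−|X|)!/|Σ|!)·(W(X) − W(X∖{a})) equals Σ_{e : a ∈ C(e)} ω(e)/|C(e)|. -/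
/-!
The game `W` is the combination `∑ₑ ω e • u_{C e}` of the games `u_S X = [X ∩ S ≠ ∅]`, and the
Shapley value is linear in the game, so it suffices to treat `u_S`. Player `a` is pivotal for a
coalition `X ∋ a` in `u_S` exactly when `a ∈ S` and `X ∖ {a}` misses `S`; writing `X = {a} ∪ Y`
with `Y ⊆ Sᶜ`, the total Shapley weight of these coalitions is
`∑ⱼ C(m, j) j! (n - 1 - j)! / n!` with `m = |Sᶜ|`, which the hockey-stick identity evaluates
to `1 / |S|`.
-/

open Finset Nat

theorem Nat.choose_mul_factorial_mul_factorial_add_sub {m j : ℕ} (k : ℕ) (hj : j ≤ m) :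
    m.choose j * j ! * (m + k - j)! = m ! * k ! * (m - j + k).choose k := by
  refine Nat.eq_of_mul_eq_mul_right (factorial_pos (m - j)) ?_
  calc m.choose j * j ! * (m + k - j)! * (m - j)!
      = m.choose j * j ! * (m - j)! * (m - j + k)! := by
        rw [Nat.sub_add_comm hj]; ring
    _ = m ! * k ! * (m - j + k).choose k * (m - j)! := by
        rw [choose_mul_factorial_mul_factorial hj, ← add_choose_mul_factorial_mul_factorial]
        ring

theorem Nat.sum_range_choose_mul_factorial_mul_factorial (m k : ℕ) :
    ∑ j ∈ range (m + 1), m.choose j * j ! * (m + k - j)! * (k + 1) = (m + k + 1)! := by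
  calc ∑ j ∈ range (m + 1), m.choose j * j ! * (m + k - j)! * (k + 1)
      = m ! * (k + 1)! * ∑ j ∈ range (m + 1), (m - j + k).choose k := by
        rw [mul_sum]
        refine sum_congr rfl fun j hj => ?_
        rw [choose_mul_factorial_mul_factorial_add_sub k (by simpa [Nat.lt_succ_iff] using hj),
          factorial_succ]
        ring
    _ = m ! * (k + 1)! * (m + k + 1).choose (k + 1) := by
        rw [← sum_range_add_choose, ← sum_range_reflect (fun i => (i + k).choose k)]
        simp only [add_tsub_cancel_right]
    _ = (m + k + 1)! := by
        have h := add_choose_mul_factorial_mul_factorial m (k + 1)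
        rw [← add_assoc] at h
        rw [← h]
        ring

theorem sum_range_choose_mul_factorial_div (m k : ℕ) :
    ∑ j ∈ range (m + 1), (m.choose j : ℝ) * (j ! * (m + k - j)! / (m + k + 1)!) =
      1 / (k + 1) := by
  have h := congrArg (Nat.cast (R := ℝ)) (Nat.sum_range_choose_mul_factorial_mul_factorial m k)
  push_cast at h
  calc ∑ j ∈ range (m + 1), (m.choose j : ℝ) * (j ! * (m + k - j)! / (m + k + 1)!)
      = (∑ j ∈ range (m + 1), (m.choose j : ℝ) * j ! * (m + k - j)! * (k + 1)) /
          ((m + k + 1)! * (k + 1)) := by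
        rw [Finset.sum_div]
        refine sum_congr rfl fun j _ => ?_
        field_simp
    _ = 1 / (k + 1) := by
        rw [h]
        field_simp

noncomputable def shapleyWeight (n s : ℕ) : ℝ := (s - 1)! * (n - s)! / n !

section Games

variable {α : Type*} [DecidableEq α]

def hittingGame (S X : Finset α) : ℝ := if (X ∩ S).Nonempty then 1 else 0

theorem hittingGame_insert_sub (S Y : Finset α) (a : α) :
    hittingGame S (insert a Y) - hittingGame S Y = if a ∈ S ∧ Disjoint Y S then 1 else 0 := by
  simp only [hittingGame, ← not_disjoint_iff_nonempty_inter]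
  by_cases ha : a ∈ S <;> by_cases hY : Disjoint Y S <;> simp [ha, hY]

variable [Fintype α]

noncomputable def shapleyValue (W : Finset α → ℝ) (a : α) : ℝ :=
  ∑ X ∈ univ.powerset.filter (fun X => a ∈ X),
    shapleyWeight (Fintype.card α) X.card * (W X - W (X.erase a))

theorem shapleyValue_sum_mul {ι : Type*} (s : Finset ι) (c : ι → ℝ) (W : ι → Finset α → ℝ)
    (a : α) :
    shapleyValue (fun X => ∑ i ∈ s, c i * W i X) a = ∑ i ∈ s, c i * shapleyValue (W i) a := by
  simp only [shapleyValue, ← sum_sub_distrib, ← mul_sub, mul_sum]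
  rw [sum_comm]
  refine sum_congr rfl fun i _ => sum_congr rfl fun X _ => ?_
  ring

theorem sum_shapleyWeight_of_disjoint_erase {S : Finset α} {a : α} (ha : a ∈ S) :
    ∑ X ∈ (univ.powerset.filter (fun X => a ∈ X)).filter (fun X => Disjoint (X.erase a) S),
      shapleyWeight (Fintype.card α) X.card = 1 / S.card := by
  have haSc : a ∉ Sᶜ := fun h => mem_compl.mp h ha
  obtain ⟨k, hk⟩ : ∃ k, S.card = k + 1 :=
    ⟨S.card - 1, (succ_pred_eq_of_pos (card_pos.mpr ⟨a, ha⟩)).symm⟩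
  have hn : Fintype.card α = Sᶜ.card + k + 1 := by rw [add_assoc, ← hk, card_compl_add_card]
  calc _ = ∑ Y ∈ Sᶜ.powerset, shapleyWeight (Fintype.card α) (Y.card + 1) := by
        refine sum_nbij' (fun X => X.erase a) (insert a) ?_ ?_ ?_ ?_ ?_
        · intro X hX
          simp_all [subset_compl_iff_disjoint_right]
        · intro Y hY
          have : a ∉ Y := fun h => haSc (mem_powerset.mp hY h)
          simp_all [subset_compl_iff_disjoint_right]
        · intro X hX
          exact insert_erase (mem_filter.mp (mem_filter.mp hX).1).2
        · intro Y hY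
          exact erase_insert fun h => haSc (mem_powerset.mp hY h)
        · intro X hX
          rw [card_erase_add_one (mem_filter.mp (mem_filter.mp hX).1).2]
    _ = ∑ j ∈ range (Sᶜ.card + 1), (Sᶜ.card.choose j : ℝ) *
          (j ! * (Sᶜ.card + k - j)! / (Sᶜ.card + k + 1)!) := by
        rw [sum_powerset_apply_card (fun j => shapleyWeight _ (j + 1))]
        refine sum_congr rfl fun j _ => ?_
        rw [nsmul_eq_mul, shapleyWeight, hn, add_tsub_cancel_right, Nat.add_sub_add_right]
    _ = 1 / S.card := by
        rw [sum_range_choose_mul_factorial_div, hk, Nat.cast_succ]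

theorem shapleyValue_hittingGame (S : Finset α) (a : α) :
    shapleyValue (hittingGame S) a = if a ∈ S then 1 / (S.card : ℝ) else 0 := by
  have hmarginal : ∀ X ∈ univ.powerset.filter (fun X => a ∈ X),
      hittingGame S X - hittingGame S (X.erase a) =
        if a ∈ S ∧ Disjoint (X.erase a) S then 1 else 0 := fun X hX => by
    rw [← hittingGame_insert_sub, insert_erase (mem_filter.mp hX).2]
  rw [shapleyValue, sum_congr rfl fun X hX => by rw [hmarginal X hX]]
  split_ifs with ha
  · simp only [ha, true_and, mul_ite, mul_one, mul_zero, ← sum_filter]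
    exact sum_shapleyWeight_of_disjoint_erase ha
  · simp [ha]

end Games

theorem stmt_1_general {α E : Type*} [Fintype α] [DecidableEq α] [Fintype E]
    (C : E → Finset α) (ω : E → ℝ)
    (W : Finset α → ℝ)
    (hW : ∀ X : Finset α, W X = ∑ e ∈ univ.filter (fun e => (X ∩ C e).Nonempty), ω e)
    (a : α) :
    ∑ X ∈ univ.powerset.filter (fun X => a ∈ X),
      (((X.card - 1).factorial * (Fintype.card α - X.card).factorial : ℝ) /
        (Fintype.card α).factorial) * (W X - W (X.erase a)) =
    ∑ e ∈ univ.filter (fun e => a ∈ C e), ω e / (C e).card := by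
  have hW' : W = fun X => ∑ e, ω e * hittingGame (C e) X := by
    ext X
    simp only [hW, hittingGame, mul_ite, mul_one, mul_zero, sum_filter]
  change shapleyValue W a = _
  simp only [hW', shapleyValue_sum_mul, shapleyValue_hittingGame, mul_ite, mul_zero, sum_filter,
    mul_one_div]

theorem stmt_1 {α E : Type*} [Fintype α] [DecidableEq α] [Fintype E]
    (hα : 0 < Fintype.card α)
    (C : E → Finset α) (hC : ∀ e, (C e).Nonempty) (ω : E → ℝ)
    (W : Finset α → ℝ)
    (hW : ∀ X : Finset α, W X = ∑ e ∈ univ.filter (fun e => (X ∩ C e).Nonempty), ω e)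
    (a : α) :
    ∑ X ∈ univ.powerset.filter (fun X => a ∈ X),
      (((X.card - 1).factorial * (Fintype.card α - X.card).factorial : ℝ) /
        (Fintype.card α).factorial) * (W X - W (X.erase a)) =
    ∑ e ∈ univ.filter (fun e => a ∈ C e), ω e / (C e).card :=
  stmt_1_general C ω W hW a
end

section
/- Let E be a finite nonempty set (students), Σ a finite set (questions), and for each e ∈ E let C(e) ⊆ Σ be nonempty (the questions answered correctly by e). Define W(X) = |{e ∈ E : X ∩ C(e) ≠ ∅}|/|E| for X ⊆ Σ. Then for every a ∈ Σ, the Shapley value of W on a equals (1/|E|)·Σ_{e : a ∈ C(e)} 1/|C(e)|. -/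
open Finset

lemma nat_key (m s : ℕ) (hs : 0 < s) :
    (∑ k ∈ range (m + 1), m.choose k * (k.factorial * (m + s - 1 - k).factorial)) * s
      = (m + s).factorial := by
  have hsum : ∑ k ∈ range (m + 1), m.choose k * (k.factorial * (m + s - 1 - k).factorial)
      = m.factorial * ((s-1).factorial * (m + s).choose s) := by
    have h1 : ∀ k ∈ range (m+1),
        m.choose k * (k.factorial * (m + s - 1 - k).factorial)
          = m.factorial * ((s-1).factorial * ((m - k) + (s-1)).choose (s-1)) := by
      intro k hk
      rw [mem_range, Nat.lt_succ_iff] at hk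
      have h2 : m + s - 1 - k = (m - k) + (s - 1) := by omega
      have h3 : ((m-k) + (s-1)).factorial
          = ((m-k)+(s-1)).choose (m-k) * (m-k).factorial * (s-1).factorial := by
        have := Nat.choose_mul_factorial_mul_factorial (Nat.le_add_right (m-k) (s-1))
        rwa [Nat.add_sub_cancel_left, eq_comm] at this
      have h4 : m.choose k * k.factorial * (m-k).factorial = m.factorial :=
        Nat.choose_mul_factorial_mul_factorial hk
      have h5 : ((m-k)+(s-1)).choose (m-k) = ((m-k)+(s-1)).choose (s-1) := by
        have := Nat.choose_symm (Nat.le_add_left (s-1) (m-k))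
        rwa [Nat.add_sub_cancel] at this
      calc m.choose k * (k.factorial * (m + s - 1 - k).factorial)
          = (m.choose k * k.factorial * (m-k).factorial) *
              (((m-k)+(s-1)).choose (m-k) * (s-1).factorial) := by rw [h2, h3]; ring
        _ = m.factorial * ((s-1).factorial * ((m - k) + (s-1)).choose (s-1)) := by
            rw [h4, h5]; ring
    rw [sum_congr rfl h1, ← mul_sum, ← mul_sum]
    congr 1
    congr 1
    have hrefl : ∑ k ∈ range (m+1), ((m - k) + (s-1)).choose (s-1)
        = ∑ k ∈ range (m+1), (k + (s-1)).choose (s-1) := by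
      have := Finset.sum_range_reflect (fun k => (k + (s-1)).choose (s-1)) (m+1)
      simpa using this
    rw [hrefl, Nat.sum_range_add_choose]
    congr 1 <;> omega
  rw [hsum]
  have h6 : (m+s).choose s * s.factorial * m.factorial = (m+s).factorial := by
    have := Nat.choose_mul_factorial_mul_factorial (Nat.le_add_left s m)
    rwa [Nat.add_sub_cancel] at this
  have h7 : s.factorial = s * (s-1).factorial := by
    conv_lhs => rw [show s = (s-1)+1 by omega]
    rw [Nat.factorial_succ]
    congr 1
    omega
  rw [← h6, h7]; ring

lemma real_key (n m s : ℕ) (hs : 0 < s) (hn : n = m + s) :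
    ∑ k ∈ range (m+1),
      (m.choose k : ℝ) * ((k.factorial : ℝ) * ((n - 1 - k).factorial : ℝ) / (n.factorial : ℝ))
      = 1 / s := by
  have hfac : (0:ℝ) < n.factorial := by positivity
  have hkey := nat_key m s hs
  have hcast : ((∑ k ∈ range (m + 1), m.choose k * (k.factorial * (m + s - 1 - k).factorial)) * s : ℝ)
      = (m + s).factorial := by exact_mod_cast congrArg (Nat.cast : ℕ → ℝ) hkey
  push_cast at hcast
  rw [eq_div_iff (by positivity : (s:ℝ) ≠ 0)]
  simp only [← mul_div_assoc]
  rw [← sum_div, div_mul_eq_mul_div, div_eq_one_iff_eq (ne_of_gt hfac)]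
  subst hn
  exact hcast


lemma shap {α : Type*} [Fintype α] [DecidableEq α] (S : Finset α) (a : α) (haS : a ∈ S) :
    ∑ X ∈ univ.powerset.filter (fun X => a ∈ X ∧ X ∩ S.erase a = ∅),
      (((X.card - 1).factorial * (Fintype.card α - X.card).factorial : ℝ) /
        (Fintype.card α).factorial)
      = 1 / (S.card : ℝ) := by
  set n := Fintype.card α with hn
  have hScard : 0 < S.card := card_pos.2 ⟨a, haS⟩
  have hsub : S.card ≤ n := by simpa [hn] using card_le_card (subset_univ S)
  have hbij : ∑ X ∈ univ.powerset.filter (fun X => a ∈ X ∧ X ∩ S.erase a = ∅),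
      (((X.card - 1).factorial * (n - X.card).factorial : ℝ) / (n.factorial : ℝ))
      = ∑ Y ∈ (univ \ S).powerset,
      (((Y.card.factorial * (n - 1 - Y.card).factorial : ℕ) : ℝ) / (n.factorial : ℝ)) := by
    refine Finset.sum_bij' (fun X _ => X.erase a) (fun Y _ => insert a Y) ?_ ?_ ?_ ?_ ?_
    · intro X hX
      rw [mem_filter, mem_powerset] at hX
      obtain ⟨-, haX, hXS⟩ := hX
      rw [mem_powerset]
      intro x hx
      rw [mem_erase] at hx
      rw [mem_sdiff]
      refine ⟨mem_univ x, fun hxS => ?_⟩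
      have : x ∈ X ∩ S.erase a := mem_inter.2 ⟨hx.2, mem_erase.2 ⟨hx.1, hxS⟩⟩
      rw [hXS] at this
      exact absurd this (notMem_empty x)
    · intro Y hY
      rw [mem_powerset] at hY
      rw [mem_filter, mem_powerset]
      refine ⟨subset_univ _, mem_insert_self a Y, ?_⟩
      rw [eq_empty_iff_forall_notMem]
      intro x hx
      rw [mem_inter, mem_insert, mem_erase] at hx
      obtain ⟨hx1, hx2, hx3⟩ := hx
      rcases hx1 with rfl | hxY
      · exact hx2 rfl
      · exact (mem_sdiff.1 (hY hxY)).2 hx3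
    · intro X hX
      rw [mem_filter] at hX
      exact insert_erase hX.2.1
    · intro Y hY
      rw [mem_powerset] at hY
      refine erase_insert fun haY => ?_
      exact (mem_sdiff.1 (hY haY)).2 haS
    · intro X hX
      rw [mem_filter] at hX
      have h1 : (X.erase a).card = X.card - 1 := card_erase_of_mem hX.2.1
      have h2 : 1 ≤ X.card := card_pos.2 ⟨a, hX.2.1⟩
      have h3 : n - 1 - (X.card - 1) = n - X.card := by omega
      rw [h1, h3]
      push_cast
      ring
  rw [hbij]
  have hcard : (univ \ S).card = n - S.card := by
    rw [card_sdiff_of_subset (subset_univ S), card_univ]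
  rw [Finset.sum_powerset_apply_card
    (fun k => ((k.factorial * (n - 1 - k).factorial : ℕ) : ℝ) / (n.factorial : ℝ)), hcard]
  have := real_key n (n - S.card) S.card hScard (by omega)
  rw [← this]
  refine sum_congr rfl fun k _ => ?_
  rw [nsmul_eq_mul]
  push_cast
  ring

theorem stmt_11 {α E : Type*} [Fintype α] [DecidableEq α] [Fintype E]
    (hE : 0 < Fintype.card E)
    (C : E → Finset α) (hC : ∀ e, (C e).Nonempty)
    (W : Finset α → ℝ)
    (hW : ∀ X : Finset α,
      W X = ((univ.filter (fun e => (X ∩ C e).Nonempty)).card : ℝ) / (Fintype.card E : ℝ))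
    (a : α) :
    ∑ X ∈ univ.powerset.filter (fun X => a ∈ X),
      (((X.card - 1).factorial * (Fintype.card α - X.card).factorial : ℝ) /
        (Fintype.card α).factorial) * (W X - W (X.erase a)) =
    (1 / (Fintype.card E : ℝ)) *
      ∑ e ∈ univ.filter (fun e => a ∈ C e), (1 : ℝ) / (C e).card := by
  classical
  have hEne : (Fintype.card E : ℝ) ≠ 0 := (Nat.cast_pos.2 hE).ne'
  set w : Finset α → ℝ := fun X =>
    (((X.card - 1).factorial * (Fintype.card α - X.card).factorial : ℝ) /
      (Fintype.card α).factorial) with hw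
  -- pointwise indicator identity
  have hind : ∀ (X : Finset α), a ∈ X → ∀ e : E,
      (if (X ∩ C e).Nonempty then (1:ℝ) else 0)
        - (if ((X.erase a) ∩ C e).Nonempty then (1:ℝ) else 0)
      = (if a ∈ C e ∧ X ∩ (C e).erase a = ∅ then (1:ℝ) else 0) := by
    intro X haX e
    by_cases hac : a ∈ C e
    · have h1 : (X ∩ C e).Nonempty := ⟨a, mem_inter.2 ⟨haX, hac⟩⟩
      rw [if_pos h1]
      by_cases h2 : X ∩ (C e).erase a = ∅
      · have h3 : ¬ ((X.erase a) ∩ C e).Nonempty := by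
          rintro ⟨x, hx⟩
          rw [mem_inter, mem_erase] at hx
          have : x ∈ X ∩ (C e).erase a :=
            mem_inter.2 ⟨hx.1.2, mem_erase.2 ⟨hx.1.1, hx.2⟩⟩
          rw [h2] at this
          exact notMem_empty x this
        rw [if_neg h3, if_pos ⟨hac, h2⟩]
        norm_num
      · have h3 : ((X.erase a) ∩ C e).Nonempty := by
          obtain ⟨x, hx⟩ := nonempty_iff_ne_empty.2 h2
          rw [mem_inter, mem_erase] at hx
          exact ⟨x, mem_inter.2 ⟨mem_erase.2 ⟨hx.2.1, hx.1⟩, hx.2.2⟩⟩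
        rw [if_pos h3, if_neg (fun h => h2 h.2)]
        norm_num
    · have hXe : (X.erase a) ∩ C e = X ∩ C e := by
        ext x
        simp only [mem_inter, mem_erase]
        constructor
        · rintro ⟨⟨-, h⟩, h2⟩; exact ⟨h, h2⟩
        · rintro ⟨h1, h2⟩
          exact ⟨⟨fun h => hac (h ▸ h2), h1⟩, h2⟩
      rw [hXe, sub_self]
      exact (if_neg fun h => hac h.1).symm
  -- step 1 : rewrite the difference
  have step1 : ∀ X ∈ univ.powerset.filter (fun X => a ∈ X),
      W X - W (X.erase a) = (1 / (Fintype.card E : ℝ)) *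
        ∑ e : E, (if a ∈ C e ∧ X ∩ (C e).erase a = ∅ then (1:ℝ) else 0) := by
    intro X hX
    have haX : a ∈ X := (mem_filter.1 hX).2
    rw [hW, hW]
    rw [div_sub_div_same]
    rw [← Finset.sum_boole, ← Finset.sum_boole, ← Finset.sum_sub_distrib]
    rw [Finset.sum_congr rfl (fun e _ => hind X haX e)]
    rw [one_div, inv_mul_eq_div]
  calc ∑ X ∈ univ.powerset.filter (fun X => a ∈ X), w X * (W X - W (X.erase a))
      = (1 / (Fintype.card E : ℝ)) * ∑ X ∈ univ.powerset.filter (fun X => a ∈ X),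
          ∑ e : E, (if a ∈ C e ∧ X ∩ (C e).erase a = ∅ then w X else 0) := by
        rw [Finset.mul_sum]
        refine sum_congr rfl fun X hX => ?_
        rw [step1 X hX, mul_left_comm, Finset.mul_sum]
        congr 1
        refine Finset.sum_congr rfl fun e _ => ?_
        rw [mul_ite, mul_one, mul_zero]
    _ = (1 / (Fintype.card E : ℝ)) * ∑ e : E,
          (if a ∈ C e then 1 / ((C e).card : ℝ) else 0) := by
        congr 1
        rw [Finset.sum_comm]
        refine Finset.sum_congr rfl fun e _ => ?_
        rw [← Finset.sum_filter, Finset.filter_filter]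
        by_cases hac : a ∈ C e
        · rw [if_pos hac, ← shap (C e) a hac]
          refine Finset.sum_congr (Finset.filter_congr fun X _ => ?_) fun X _ => rfl
          simp [hac]
        · rw [if_neg hac, Finset.filter_false_of_mem, Finset.sum_empty]
          intro X _ h
          exact hac h.2.1
    _ = (1 / (Fintype.card E : ℝ)) *
          ∑ e ∈ univ.filter (fun e => a ∈ C e), (1 : ℝ) / (C e).card := by
        rw [Finset.sum_filter]
end

section
/- For all integers n ≥ 1 and all m with 1 ≤ m ≤ n, the identity Σ_{k=1}^{n} ((k−1)!(n−k)!/n!)·C(n−m, k−1) = 1/m holds in ℚ. -/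
/-!
Cancelling factorials, the `k`-th term equals `C(n - k, m - 1) / (m · C(n, m))` (both sides
vanish once `n - k < m - 1`), and by the hockey-stick identity these numerators sum to `C(n, m)`.
-/

open Nat Finset

theorem sum_range_choose_eq_choose_succ (n r : ℕ) :
    ∑ i ∈ range n, i.choose r = n.choose (r + 1) := by
  induction n with
  | zero => simp
  | succ n ih => rw [sum_range_succ, ih, choose_succ_succ', add_comm]

theorem sum_Icc_one_choose_sub (n r : ℕ) :
    ∑ k ∈ Icc 1 n, (n - k).choose r = n.choose (r + 1) := by
  rw [← Ico_add_one_right_eq_Icc, sum_Ico_reflect (·.choose r) 1 le_rfl, Nat.sub_self,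
    add_tsub_cancel_right, ← range_eq_Ico, sum_range_choose_eq_choose_succ]

theorem factorial_mul_factorial_div_mul_choose {j l r n m : ℕ} (hn : j + l + 1 = n)
    (hm : r + 1 = m) (hmn : m ≤ n) :
    (j ! * l ! : ℚ) / n ! * (n - m).choose j = l.choose r / (m * n.choose m) := by
  subst hn hm
  rcases le_or_gt r l with hrl | hlr
  · obtain ⟨s, rfl⟩ := Nat.exists_eq_add_of_le hrl
    rw [show j + (r + s) + 1 - (r + 1) = j + s by omega, Nat.cast_add_choose ℚ,
      Nat.cast_add_choose ℚ, show j + (r + s) + 1 = r + 1 + (j + s) by ring,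
      Nat.cast_add_choose ℚ]
    push_cast [Nat.factorial_succ]
    field_simp
  · rw [Nat.choose_eq_zero_of_lt (show j + l + 1 - (r + 1) < j by omega),
      Nat.choose_eq_zero_of_lt hlr]
    simp

theorem stmt_12_general (n m : ℕ) (hm1 : 1 ≤ m) (hmn : m ≤ n) :
    ∑ k ∈ Finset.Icc 1 n,
      ((k - 1).factorial * (n - k).factorial : ℚ) / n.factorial * ((n - m).choose (k - 1)) =
    1 / m := by
  have hterm : ∀ k ∈ Icc 1 n,
      ((k - 1)! * (n - k)! : ℚ) / n ! * (n - m).choose (k - 1) =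
        (n - k).choose (m - 1) / (m * n.choose m) := by
    intro k hk
    obtain ⟨hk1, hkn⟩ := mem_Icc.mp hk
    exact factorial_mul_factorial_div_mul_choose (by omega) (by omega) hmn
  rw [sum_congr rfl hterm, ← sum_div, ← Nat.cast_sum, sum_Icc_one_choose_sub,
    Nat.sub_add_cancel hm1]
  have hchoose : (n.choose m : ℚ) ≠ 0 := by exact_mod_cast (Nat.choose_pos hmn).ne'
  field_simp

theorem stmt_12 (n m : ℕ) (hn : 1 ≤ n) (hm1 : 1 ≤ m) (hmn : m ≤ n) :
    ∑ k ∈ Finset.Icc 1 n,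
      ((k - 1).factorial * (n - k).factorial : ℚ) / n.factorial * ((n - m).choose (k - 1)) =
    1 / m :=
  stmt_12_general n m hm1 hmn
end

section
/- Let Σ be a finite set with n = |Σ| ≥ 1 and fix a nonempty subset S ⊆ Σ and a ∈ S with |S| = m. Then Σ_{X ⊆ Σ, a ∈ X, X ∩ S = {a}} ((|X|−1)!(n−|X|)!/n!) = 1/m. -/
open Finset

lemma key_fact (m k : ℕ) :
    (m + 1) * ∑ j ∈ Finset.range (k+1),
        k.choose j * (j.factorial * (m + k - j).factorial)
      = (m + 1 + k).factorial := by
  induction k with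
  | zero => simp [Nat.factorial_succ, Nat.mul_comm]
  | succ k ih =>
    have step : ∑ j ∈ Finset.range (k+2),
          (k+1).choose j * (j.factorial * (m + (k+1) - j).factorial)
        = (m + k + 2) * ∑ j ∈ Finset.range (k+1),
            k.choose j * (j.factorial * (m + k - j).factorial) := by
      rw [Finset.sum_range_succ']
      have h1 : ∀ i ∈ Finset.range (k+1),
          (k+1).choose (i+1) * ((i+1).factorial * (m + (k+1) - (i+1)).factorial)
          = k.choose i * ((i+1).factorial * (m + k - i).factorial)
            + k.choose (i+1) * ((i+1).factorial * (m + k - i).factorial) := by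
        intro i hi
        have : m + (k+1) - (i+1) = m + k - i := by omega
        rw [this, Nat.choose_succ_succ, add_mul]
      rw [Finset.sum_congr rfl h1, Finset.sum_add_distrib]
      have h2 : ∑ i ∈ Finset.range (k+1),
          k.choose (i+1) * ((i+1).factorial * (m + k - i).factorial)
          + (k+1).choose 0 * (Nat.factorial 0 * (m + (k+1) - 0).factorial)
          = ∑ j ∈ Finset.range (k+1),
              k.choose j * (j.factorial * (m + k + 1 - j).factorial) := by
        rw [Finset.sum_range_succ' (fun j => k.choose j * (j.factorial * (m + k + 1 - j).factorial))]
        rw [Finset.sum_range_succ]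
        rw [Nat.choose_succ_self, zero_mul, add_zero]
        congr 1
        · refine Finset.sum_congr rfl fun i hi => ?_
          rw [Finset.mem_range] at hi
          congr 3
          omega
        · simp only [Nat.choose_zero_right, one_mul, Nat.factorial_zero, Nat.sub_zero]
          congr 1
      rw [add_assoc, h2, ← Finset.sum_add_distrib, Finset.mul_sum]
      refine Finset.sum_congr rfl fun j hj => ?_
      rw [Finset.mem_range] at hj
      have e1 : m + k + 1 - j = (m + k - j) + 1 := by omega
      rw [e1, Nat.factorial_succ, Nat.factorial_succ]
      have e2 : m + k + 2 = (j + 1) + ((m + k - j) + 1) := by omega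
      rw [e2]
      ring
    rw [step, ← mul_assoc, mul_comm (m+1) (m+k+2), mul_assoc, ih]
    have : m + 1 + (k + 1) = (m + 1 + k) + 1 := by omega
    rw [this, Nat.factorial_succ]
    ring_nf

theorem stmt_16 {α : Type*} [Fintype α] [DecidableEq α]
    (hn : 1 ≤ Fintype.card α)
    (S : Finset α) (a : α) (haS : a ∈ S) (m : ℕ) (hm : S.card = m) :
    ∑ X ∈ univ.powerset.filter (fun X => a ∈ X ∧ X ∩ S = {a}),
      (((X.card - 1).factorial * (Fintype.card α - X.card).factorial : ℚ) /
        (Fintype.card α).factorial) =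
    1 / (m : ℚ) := by
  classical
  set n := Fintype.card α with hn'
  have hmn : m ≤ n := hm ▸ S.card_le_univ
  have hm1 : 1 ≤ m := hm ▸ Finset.card_pos.2 ⟨a, haS⟩
  -- step 1: bijection to subsets of Sᶜ
  have hbij : ∑ X ∈ univ.powerset.filter (fun X => a ∈ X ∧ X ∩ S = {a}),
      (((X.card - 1).factorial * (n - X.card).factorial : ℚ) / n.factorial)
      = ∑ T ∈ Sᶜ.powerset,
      ((T.card.factorial * (n - (T.card + 1)).factorial : ℚ) / n.factorial) := by
    refine Finset.sum_nbij' (fun X => X.erase a) (fun T => insert a T) ?_ ?_ ?_ ?_ ?_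
    · intro X hX
      simp only [Finset.mem_filter, Finset.mem_powerset] at hX
      obtain ⟨-, haX, hXS⟩ := hX
      rw [Finset.mem_powerset]
      intro x hx
      rw [Finset.mem_erase] at hx
      rw [Finset.mem_compl]
      intro hxS
      have : x ∈ X ∩ S := Finset.mem_inter.2 ⟨hx.2, hxS⟩
      rw [hXS, Finset.mem_singleton] at this
      exact hx.1 this
    · intro T hT
      rw [Finset.mem_powerset] at hT
      simp only [Finset.mem_filter, Finset.mem_powerset]
      refine ⟨Finset.subset_univ _, Finset.mem_insert_self a T, ?_⟩
      ext x
      simp only [Finset.mem_inter, Finset.mem_insert, Finset.mem_singleton]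
      constructor
      · rintro ⟨hx1 | hx1, hx2⟩
        · exact hx1
        · exact absurd hx2 (Finset.mem_compl.1 (hT hx1))
      · rintro rfl; exact ⟨Or.inl rfl, haS⟩
    · intro X hX
      simp only [Finset.mem_filter] at hX
      exact Finset.insert_erase hX.2.1
    · intro T hT
      rw [Finset.mem_powerset] at hT
      have : a ∉ T := fun h => (Finset.mem_compl.1 (hT h)) haS
      exact Finset.erase_insert this
    · intro X hX
      simp only [Finset.mem_filter] at hX
      have hcard : (X.erase a).card = X.card - 1 := Finset.card_erase_of_mem hX.2.1
      have hX1 : 1 ≤ X.card := Finset.card_pos.2 ⟨a, hX.2.1⟩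
      rw [hcard]
      have : X.card - 1 + 1 = X.card := by omega
      rw [this]
  rw [hbij]
  rw [Finset.sum_powerset_apply_card (fun j => ((j.factorial * (n - (j + 1)).factorial : ℚ) / n.factorial))]
  have hScard : Sᶜ.card = n - m := by rw [Finset.card_compl, hm]
  rw [hScard]
  -- now the numeric identity
  have hk := key_fact (m - 1) (n - m)
  have hm' : m - 1 + 1 = m := by omega
  have hkey : m * ∑ j ∈ Finset.range (n - m + 1),
      (n-m).choose j * (j.factorial * (n - 1 - j).factorial) = n.factorial := by
    rw [hm'] at hk
    have h2 : ∀ j ∈ Finset.range (n - m + 1),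
        (n-m).choose j * (j.factorial * (m - 1 + (n - m) - j).factorial)
        = (n-m).choose j * (j.factorial * (n - 1 - j).factorial) := by
      intro j hj
      congr 3
      omega
    rw [Finset.sum_congr rfl h2] at hk
    rw [hk]
    congr 1
    omega
  have hnf : (n.factorial : ℚ) ≠ 0 := Nat.cast_ne_zero.2 n.factorial_ne_zero
  have hmq : (m : ℚ) ≠ 0 := Nat.cast_ne_zero.2 (by omega)
  have hterm : ∀ j ∈ Finset.range (n - m + 1),
      (n-m).choose j • ((j.factorial * (n - (j + 1)).factorial : ℚ) / n.factorial)
      = ((((n-m).choose j * (j.factorial * (n - 1 - j).factorial) : ℕ) : ℚ)) / n.factorial := by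
    intro j hj
    rw [nsmul_eq_mul]
    push_cast
    have : n - (j + 1) = n - 1 - j := by omega
    rw [this]
    ring
  rw [Finset.sum_congr rfl hterm, ← Finset.sum_div, ← Nat.cast_sum]
  rw [div_eq_div_iff hnf hmq]
  rw [← Nat.cast_mul]
  norm_cast
  rw [one_mul, mul_comm]
  exact hkey
end

section
/- Let Σ be a finite set with n = |Σ| ≥ 2, S ⊆ Σ a subset with 1 ≤ |S| = m ≤ n−1, and a ∈ Σ∖S. Then Σ_{X ⊆ Σ, a ∈ X, |X| ≥ 2, X∖{a} ⊆ S, X∖{a} ≠ ∅} ((|X|−1)!(n−|X|)!/n!) = 1/(n−m) − 1/n. -/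
open Finset Nat

/-!
Removing `a` puts the coalitions `X` in bijection with the nonempty `Y ⊆ S`, with `|Y| = |X| - 1`.
Over all `Y ⊆ S`, including `∅`, the weights `|Y|! (n-1-|Y|)! / n!` sum to `1/(n-m)`: grouped by
`k = |Y|` the `k`-th term is `(T k - T (k+1)) / (n-m)` with `T k = m(m-1)⋯(m-k+1) (n-k)! / n!`, so
the sum telescopes from `T 0 = 1` to `T (m+1) = 0`. The empty set contributes `(n-1)!/n! = 1/n`.
-/

theorem descFactorial_mul_factorial_sub_eq {m n k : ℕ} (hmn : m ≤ n) (hkn : k < n) :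
    m.descFactorial k * (n - k)! =
      (n - m) * (m.descFactorial k * (n - (k + 1))!) + m.descFactorial (k + 1) * (n - (k + 1))! := by
  have hfac : (n - k)! = (n - k) * (n - (k + 1))! := by
    rw [← Nat.mul_factorial_pred (by omega), Nat.sub_sub]
  rw [descFactorial_succ, hfac]
  rcases le_or_gt k m with hkm | hmk
  · have hsplit : n - k = (n - m) + (m - k) := by omega
    rw [hsplit]
    ring
  · simp [descFactorial_eq_zero_iff_lt.mpr hmk]

theorem sub_mul_sum_range_descFactorial_add {m n j : ℕ} (hmn : m ≤ n) (hjn : j ≤ n) :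
    (n - m) * ∑ k ∈ range j, m.descFactorial k * (n - (k + 1))! + m.descFactorial j * (n - j)! =
      n ! := by
  induction j with
  | zero => simp
  | succ j ih =>
    rw [sum_range_succ, ← ih (by omega), descFactorial_mul_factorial_sub_eq hmn (k := j) (by omega)]
    ring

theorem sub_mul_sum_powerset_factorial_mul_factorial {α : Type*} {S : Finset α} {n : ℕ}
    (hSn : S.card < n) :
    (n - S.card) * ∑ Y ∈ S.powerset, Y.card ! * (n - (Y.card + 1))! = n ! := by
  have h := sub_mul_sum_range_descFactorial_add hSn.le (j := S.card + 1) hSn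
  rw [descFactorial_eq_zero_iff_lt.mpr (lt_succ_self _), zero_mul, add_zero] at h
  rw [sum_powerset_apply_card (fun k => k ! * (n - (k + 1))!), ← h]
  congr 1
  refine sum_congr rfl fun k _ => ?_
  rw [smul_eq_mul, descFactorial_eq_factorial_mul_choose]
  ring

theorem sum_powerset_factorial_mul_factorial_div {α : Type*} {S : Finset α} {n : ℕ}
    (hSn : S.card < n) :
    ∑ Y ∈ S.powerset, (Y.card ! * (n - (Y.card + 1))! : ℚ) / n ! = 1 / (n - S.card : ℕ) := by
  have h : ((n - S.card : ℕ) : ℚ) * ∑ Y ∈ S.powerset, (Y.card ! * (n - (Y.card + 1))! : ℚ) = n ! := by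
    exact_mod_cast sub_mul_sum_powerset_factorial_mul_factorial hSn
  have hsub : ((n - S.card : ℕ) : ℚ) ≠ 0 := by exact_mod_cast (Nat.sub_pos_of_lt hSn).ne'
  rw [← sum_div, div_eq_div_iff (by positivity) hsub, one_mul, mul_comm, h]

theorem factorial_sub_one_div_factorial {n : ℕ} (hn : n ≠ 0) : ((n - 1)! : ℚ) / n ! = 1 / n := by
  rw [div_eq_div_iff (by positivity) (by positivity), ← Nat.mul_factorial_pred hn]
  push_cast
  ring

theorem sum_filter_mem_erase_subset_eq {α β : Type*} [Fintype α] [DecidableEq α]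
    [AddCommMonoid β] {S : Finset α} {a : α} (ha : a ∉ S) (g : ℕ → β) :
    ∑ X ∈ univ.powerset.filter
        (fun X => a ∈ X ∧ 2 ≤ X.card ∧ X.erase a ⊆ S ∧ (X.erase a).Nonempty), g X.card =
      ∑ Y ∈ S.powerset.erase ∅, g (Y.card + 1) := by
  refine sum_nbij' (fun X => X.erase a) (insert a) ?_ ?_ ?_ ?_ ?_
  · intro X hX
    simp only [mem_filter, mem_powerset, mem_erase, ← nonempty_iff_ne_empty] at hX ⊢
    exact ⟨hX.2.2.2.2, hX.2.2.2.1⟩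
  · intro Y hY
    simp only [mem_filter, mem_powerset, mem_erase, ← nonempty_iff_ne_empty] at hY ⊢
    have haY : a ∉ Y := fun h => ha (hY.2 h)
    have hY0 := hY.1.card_pos
    rw [card_insert_of_notMem haY, erase_insert haY]
    exact ⟨subset_univ _, mem_insert_self _ _, by omega, hY.2, hY.1⟩
  · intro X hX
    simp only [mem_filter] at hX
    exact insert_erase hX.2.1
  · intro Y hY
    simp only [mem_erase, mem_powerset] at hY
    exact erase_insert fun h => ha (hY.2 h)
  · intro X hX
    simp only [mem_filter] at hX
    rw [card_erase_of_mem hX.2.1, Nat.sub_add_cancel (by omega)]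

theorem stmt_17_general {α : Type*} [Fintype α] [DecidableEq α]
    (S : Finset α) (m : ℕ) (hm : S.card = m)
    (a : α) (ha : a ∉ S) :
    ∑ X ∈ univ.powerset.filter
        (fun X => a ∈ X ∧ 2 ≤ X.card ∧ X.erase a ⊆ S ∧ (X.erase a).Nonempty),
      (((X.card - 1).factorial * (Fintype.card α - X.card).factorial : ℚ) /
        (Fintype.card α).factorial) =
    1 / ((Fintype.card α - m : ℕ) : ℚ) - 1 / (Fintype.card α : ℚ) := by
  subst hm
  set n := Fintype.card α
  have hSn : S.card < n :=
    calc S.card ≤ (univ.erase a).card :=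
          card_le_card fun x hx => mem_erase.mpr ⟨ne_of_mem_of_not_mem hx ha, mem_univ x⟩
      _ < n := card_erase_lt_of_mem (mem_univ a)
  rw [sum_filter_mem_erase_subset_eq ha fun k => ((k - 1)! * (n - k)! : ℚ) / n !,
    sum_erase_eq_sub (empty_mem_powerset S)]
  simp only [add_tsub_cancel_right]
  rw [sum_powerset_factorial_mul_factorial_div hSn]
  simp [factorial_sub_one_div_factorial (n := n) (by omega)]

theorem stmt_17 {α : Type*} [Fintype α] [DecidableEq α]
    (hn : 2 ≤ Fintype.card α)
    (S : Finset α) (m : ℕ) (hm : S.card = m) (hm1 : 1 ≤ m) (hm2 : m ≤ Fintype.card α - 1)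
    (a : α) (ha : a ∉ S) :
    ∑ X ∈ univ.powerset.filter
        (fun X => a ∈ X ∧ 2 ≤ X.card ∧ X.erase a ⊆ S ∧ (X.erase a).Nonempty),
      (((X.card - 1).factorial * (Fintype.card α - X.card).factorial : ℚ) /
        (Fintype.card α).factorial) =
    1 / ((Fintype.card α - m : ℕ) : ℚ) - 1 / (Fintype.card α : ℚ) :=
  stmt_17_general S m hm a ha
end
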